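/- Rigid reduction extraction: in a congruence-generated rewrite system where no reduction can occur at a rigid constructor's root, if C[τ₁] ⇝* τ₀ and C[τ₂] ⇝* τ₀ for a one-hole context C built only from rigid constructors, then there exists τ₃ with τ₁ ⇝* τ₃ and τ₂ ⇝* τ₃. -/
import Mathlib


/-- A simple type language: base constants, variables, and arrows. -/
inductive Ty where
  | base : ℕ → Ty
  | var : ℕ → Ty
  | arrow : Ty → Ty → Ty

/-- Many-hole contexts over `Ty`: a type with any number of hole positions. -/
inductive MCtx where
  | hole : MCtx
  | base : ℕ → MCtx
  | var : ℕ → MCtx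
  | arrow : MCtx → MCtx → MCtx

/-- Fill every hole of the context with the given type. -/
def MCtx.fill : MCtx → Ty → Ty
  | .hole, τ => τ
  | .base n, _ => .base n
  | .var n, _ => .var n
  | .arrow C₁ C₂, τ => .arrow (C₁.fill τ) (C₂.fill τ)

/-- One-hole contexts whose path to the hole passes only through rigid
constructor (arrow) arguments. -/
inductive RCtx where
  | hole : RCtx
  | arrowL : RCtx → Ty → RCtx
  | arrowR : Ty → RCtx → RCtx

def RCtx.fill : RCtx → Ty → Ty
  | .hole, τ => τ
  | .arrowL C b, τ => .arrow (C.fill τ) b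
  | .arrowR a C, τ => .arrow a (C.fill τ)


/-- Two rigid contexts with the same hole path. -/
inductive RCtx.Sh : RCtx → RCtx → Prop
  | hole : RCtx.Sh .hole .hole
  | arrowL {C C' b b'} : RCtx.Sh C C' → RCtx.Sh (.arrowL C b) (.arrowL C' b')
  | arrowR {C C' a a'} : RCtx.Sh C C' → RCtx.Sh (.arrowR a C) (.arrowR a' C')

lemma RCtx.Sh.trans' : ∀ {C C' C'' : RCtx}, RCtx.Sh C C' → RCtx.Sh C' C'' → RCtx.Sh C C''
  | _, _, _, .hole, .hole => .hole
  | _, _, _, .arrowL h, .arrowL h' => .arrowL (h.trans' h')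
  | _, _, _, .arrowR h, .arrowR h' => .arrowR (h.trans' h')

lemma RCtx.fill_inj : ∀ {C C' C'' : RCtx} {x y : Ty}, RCtx.Sh C C' → RCtx.Sh C C'' →
    C'.fill x = C''.fill y → x = y
  | _, _, _, _, _, .hole, .hole, h => h
  | _, _, _, _, _, .arrowL h1, .arrowL h2, h => by
      simp only [RCtx.fill, Ty.arrow.injEq] at h
      exact RCtx.fill_inj h1 h2 h.1
  | _, _, _, _, _, .arrowR h1, .arrowR h2, h => by
      simp only [RCtx.fill, Ty.arrow.injEq] at h
      exact RCtx.fill_inj h1 h2 h.2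

lemma RCtx.Sh.refl : ∀ (C : RCtx), RCtx.Sh C C
  | .hole => .hole
  | .arrowL C _ => .arrowL (RCtx.Sh.refl C)
  | .arrowR _ C => .arrowR (RCtx.Sh.refl C)

lemma rigid_step (r : Ty → Ty → Prop)
    (hchar : ∀ a b u, r (.arrow a b) u ↔
      ((∃ a', r a a' ∧ u = .arrow a' b) ∨ (∃ b', r b b' ∧ u = .arrow a b'))) :
    ∀ (C : RCtx) (τ u : Ty), r (C.fill τ) u →
      ∃ C' τ', RCtx.Sh C C' ∧ u = C'.fill τ' ∧ Relation.ReflTransGen r τ τ'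
  | .hole, τ, u, h => ⟨.hole, u, .hole, rfl, Relation.ReflTransGen.single h⟩
  | .arrowL C b, τ, u, h => by
      rcases (hchar _ _ _).1 h with ⟨a', ha, rfl⟩ | ⟨b', hb, rfl⟩
      · obtain ⟨C', τ', hs, rfl, hr⟩ := rigid_step r hchar C τ a' ha
        exact ⟨.arrowL C' b, τ', .arrowL hs, rfl, hr⟩
      · exact ⟨.arrowL C b', τ, .arrowL (RCtx.Sh.refl C), rfl, .refl⟩
  | .arrowR a C, τ, u, h => by
      rcases (hchar _ _ _).1 h with ⟨a', ha, rfl⟩ | ⟨b', hb, rfl⟩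
      · exact ⟨.arrowR a' C, τ, .arrowR (RCtx.Sh.refl C), rfl, .refl⟩
      · obtain ⟨C', τ', hs, rfl, hr⟩ := rigid_step r hchar C τ b' hb
        exact ⟨.arrowR a C', τ', .arrowR hs, rfl, hr⟩

lemma rigid_steps (r : Ty → Ty → Prop)
    (hchar : ∀ a b u, r (.arrow a b) u ↔
      ((∃ a', r a a' ∧ u = .arrow a' b) ∨ (∃ b', r b b' ∧ u = .arrow a b')))
    (C : RCtx) (τ u : Ty) (h : Relation.ReflTransGen r (C.fill τ) u) :
    ∃ C' τ', RCtx.Sh C C' ∧ u = C'.fill τ' ∧ Relation.ReflTransGen r τ τ' := by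
  induction h with
  | refl => exact ⟨C, τ, RCtx.Sh.refl C, rfl, .refl⟩
  | tail _ hbc ih =>
      obtain ⟨C', τ', hs, rfl, hr⟩ := ih
      obtain ⟨C'', τ'', hs', rfl, hr'⟩ := rigid_step r hchar C' τ' _ hbc
      exact ⟨C'', τ'', hs.trans' hs', rfl, hr.trans hr'⟩

/-- Rigid reduction extraction: in a congruence-generated rewrite system that
never rewrites at the root of a rigid constructor (arrow), if C[τ₁] and C[τ₂]
both reduce to a common τ₀ for a rigid one-hole context C, then τ₁ and τ₂ are
joinable. -/
theorem rigid_reduction (r : Ty → Ty → Prop)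
    (hchar : ∀ a b u, r (.arrow a b) u ↔
      ((∃ a', r a a' ∧ u = .arrow a' b) ∨ (∃ b', r b b' ∧ u = .arrow a b')))
    (C : RCtx) (τ₁ τ₂ τ₀ : Ty)
    (h₁ : Relation.ReflTransGen r (C.fill τ₁) τ₀)
    (h₂ : Relation.ReflTransGen r (C.fill τ₂) τ₀) :
    ∃ τ₃, Relation.ReflTransGen r τ₁ τ₃ ∧ Relation.ReflTransGen r τ₂ τ₃ := by
  obtain ⟨C₁, τ₁', hs₁, he₁, hr₁⟩ := rigid_steps r hchar C τ₁ τ₀ h₁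
  obtain ⟨C₂, τ₂', hs₂, he₂, hr₂⟩ := rigid_steps r hchar C τ₂ τ₀ h₂
  have : τ₁' = τ₂' := RCtx.fill_inj hs₁ hs₂ (he₁ ▸ he₂)
  exact ⟨τ₁', hr₁, this ▸ hr₂⟩
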